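/- Let G be a finite simple graph with ed_d(G) ≤ k. Then the (k+d)-degree torso of G has tree-depth at most k((k+1)(k+d))^{2^k}. -/

import Mathlib

open SimpleGraph Set

variable {V : Type*}

/-- The degree of a vertex: the number of its neighbours. -/
noncomputable def gdeg (G : SimpleGraph V) (v : V) : ℕ := (G.neighborSet v).ncard

/-- The degree of `v` inside the vertex set `A`, i.e. its degree in the induced subgraph. -/
noncomputable def degreeIn (G : SimpleGraph V) (A : Set V) (v : V) : ℕ :=
  (A ∩ G.neighborSet v).ncard

/-- A tree order: a partial order in which the set of predecessors of any
element is linearly ordered. -/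
structure IsTreeOrder (le : V → V → Prop) : Prop where
  refl : ∀ a, le a a
  antisymm : ∀ a b, le a b → le b a → a = b
  trans : ∀ a b c, le a b → le b c → le a c
  downLinear : ∀ a b c, le b a → le c a → le b c ∨ le c b

/-- A chain: a set of pairwise comparable elements. -/
def IsChainOf (le : V → V → Prop) (s : Set V) : Prop :=
  ∀ a ∈ s, ∀ b ∈ s, le a b ∨ le b a

/-- The order has height at most `k`: every chain has at most `k` elements. -/
def HeightLE (le : V → V → Prop) (k : ℕ) : Prop :=
  ∀ s : Set V, IsChainOf le s → s.ncard ≤ k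

/-- `v` is a maximal element of the order `le`. -/
def IsLeMaximal (le : V → V → Prop) (v : V) : Prop := ∀ w, le v w → w = v

/-- The order has `d`-height at most `k`: every chain contains at most `k`
non-maximal elements. -/
def DHeightLE (le : V → V → Prop) (k : ℕ) : Prop :=
  ∀ s : Set V, IsChainOf le s → {v ∈ s | ¬ IsLeMaximal le v}.ncard ≤ k

/-- An elimination order for `G`: a tree order in which the endpoints of each
edge are comparable. -/
def IsElimOrder (G : SimpleGraph V) (le : V → V → Prop) : Prop :=
  IsTreeOrder le ∧ ∀ u v, G.Adj u v → le u v ∨ le v u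

/-- The set `S_v` of neighbours of `v` that are incomparable to `v`. -/
def Sset (G : SimpleGraph V) (le : V → V → Prop) (v : V) : Set V :=
  {u | G.Adj u v ∧ ¬ le u v ∧ ¬ le v u}

/-- An elimination order to degree `d` for `G`. -/
def IsElimOrderToDeg (G : SimpleGraph V) (d : ℕ) (le : V → V → Prop) : Prop :=
  IsTreeOrder le ∧ ∀ v : V, Sset G le v = ∅ ∨
    (IsLeMaximal le v ∧ (Sset G le v).ncard ≤ d ∧
      ∀ u ∈ Sset G le v, {w | le w u ∧ w ≠ u} = {w | le w v ∧ w ≠ v})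

/-- `C` is the vertex set of a connected component of the induced subgraph `G[B]`:
a maximal connected subset of `B`. -/
def IsCompOf (G : SimpleGraph V) (B C : Set V) : Prop :=
  C.Nonempty ∧ C ⊆ B ∧ (G.induce C).Connected ∧
    ∀ C', C ⊆ C' → C' ⊆ B → (G.induce C').Connected → C' = C

/-- `TdLE G A k` says that the tree-depth of the induced subgraph `G[A]` is at
most `k`, following the recursive definition of tree-depth. -/
inductive TdLE (G : SimpleGraph V) : Set V → ℕ → Prop
  | empty (k : ℕ) : TdLE G ∅ k
  | conn (A : Set V) (k : ℕ) (hc : (G.induce A).Connected) (v : V) (hv : v ∈ A)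
      (h : TdLE G (A \ {v}) k) : TdLE G A (k + 1)
  | disconn (A : Set V) (k : ℕ) (hne : A.Nonempty) (hc : ¬ (G.induce A).Connected)
      (h : ∀ C, IsCompOf G A C → TdLE G C k) : TdLE G A k

/-- `EdLE G d A k` says that the elimination distance to degree `d` of the
induced subgraph `G[A]` is at most `k`, following the recursive definition. -/
inductive EdLE (G : SimpleGraph V) (d : ℕ) : Set V → ℕ → Prop
  | base (A : Set V) (k : ℕ) (h : ∀ v ∈ A, degreeIn G A v ≤ d) : EdLE G d A k
  | conn (A : Set V) (k : ℕ) (hd : ¬ ∀ v ∈ A, degreeIn G A v ≤ d)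
      (hc : (G.induce A).Connected) (v : V) (hv : v ∈ A)
      (h : EdLE G d (A \ {v}) k) : EdLE G d A (k + 1)
  | disconn (A : Set V) (k : ℕ) (hd : ¬ ∀ v ∈ A, degreeIn G A v ≤ d)
      (hc : ¬ (G.induce A).Connected)
      (h : ∀ C, IsCompOf G A C → EdLE G d C k) : EdLE G d A k

/-- The `m`-degree torso of `G`: the graph on the vertices of degree greater
than `m`, where two such vertices are adjacent if some path of `G` between them
has all its internal vertices of degree at most `m`. -/
def ATorso (G : SimpleGraph V) (m : ℕ) : SimpleGraph {v : V // m < gdeg G v} where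
  Adj u v := u ≠ v ∧ ∃ p : G.Walk u.1 v.1, p.IsPath ∧
      ∀ w ∈ p.support, w ≠ u.1 → w ≠ v.1 → gdeg G w ≤ m
  symm := by
    refine ⟨?_⟩
    rintro u v ⟨hne, p, hp, hsup⟩
    refine ⟨hne.symm, p.reverse, hp.reverse, fun w hw h1 h2 => ?_⟩
    rw [SimpleGraph.Walk.support_reverse, List.mem_reverse] at hw
    exact hsup w hw h2 h1
  loopless := by refine ⟨?_⟩; rintro u ⟨hne, -⟩; exact hne rfl

/-!
Write `m = k + d` and call a vertex low if its degree is at most `m`. The torso interior of a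
vertex set `A` consists of the torso vertices from which no walk through low vertices leaves `A`;
for `A = univ` it is the whole torso. Follow the elimination recursion of `G[A]`, keeping a set
`B ⊇ N(A) \ A` with `|B| + j ≤ k`. In the base case all vertices of `A` have degree at most
`d + |B| ≤ m`, so the interior is empty. Interiors of different components of `A` are not
adjacent in the torso, since a torso edge between them would be a low walk leaving a component.
Deleting `v` removes from the interior only `v` itself or, when `v` is low, high vertices of
`A \ {v}` adjacent to the low component `R` of `v`. A second induction along the same recursion
bounds their number by `(m + 2) ^ j` times the number of edges entering `A \ {v}` from `R`; these
start in `B ∪ {v}`, so there are at most `k * m` of them. Each of the `k` deletions thus costs at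
most `1 + k * m * (m + 2) ^ (k - 1) ≤ ((k + 1) * m) ^ (2 ^ k)` levels of tree-depth.
-/

section Components

variable {G : SimpleGraph V} {A C S : Set V}

theorem subset_of_induce_connected {P : Set V} (hS : (G.induce S).Connected) {x : V}
    (hxS : x ∈ S) (hxP : x ∈ P) (hP : ∀ u ∈ S, ∀ w ∈ S, u ∈ P → G.Adj u w → w ∈ P) :
    S ⊆ P := by
  intro y hyS
  by_contra hyP
  obtain ⟨p⟩ := hS.preconnected ⟨x, hxS⟩ ⟨y, hyS⟩
  obtain ⟨d, -, hd₁, hd₂⟩ := p.exists_boundary_dart {z | z.1 ∈ P} hxP hyP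
  exact hd₂ (hP _ d.fst.2 _ d.snd.2 hd₁ (induce_adj.1 d.adj))

theorem isCompOf_self (hA : (G.induce A).Connected) : IsCompOf G A A :=
  ⟨nonempty_coe_sort.1 hA.nonempty, subset_rfl, hA, fun _ hAC hCA _ => hCA.antisymm hAC⟩

theorem exists_isCompOf_superset [Finite V] (hSA : S ⊆ A) (hS : (G.induce S).Connected) :
    ∃ C, IsCompOf G A C ∧ S ⊆ C := by
  obtain ⟨C, hSC, hmax⟩ :=
    (toFinite {C | C ⊆ A ∧ (G.induce C).Connected}).exists_le_maximal ⟨hSA, hS⟩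
  refine ⟨C, ⟨nonempty_coe_sort.1 hmax.prop.2.nonempty, hmax.prop.1, hmax.prop.2,
    fun C' hCC' hC'A hC' => hmax.eq_of_ge ⟨hC'A, hC'⟩ hCC'⟩, hSC⟩

theorem exists_isCompOf_mem [Finite V] {v : V} (hv : v ∈ A) : ∃ C, IsCompOf G A C ∧ v ∈ C := by
  have hconn : (G.induce {v}).Connected := by rw [induce_singleton_eq_top]; exact connected_top
  obtain ⟨C, hC, hvC⟩ := exists_isCompOf_superset (singleton_subset_iff.2 hv) hconn
  exact ⟨C, hC, hvC rfl⟩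

namespace IsCompOf

theorem subset_of_connected (hC : IsCompOf G A C) (hSA : S ⊆ A) (hS : (G.induce S).Connected)
    {x : V} (hxS : x ∈ S) (hxC : x ∈ C) : S ⊆ C :=
  union_eq_left.1 <| hC.2.2.2 (C ∪ S) subset_union_left (union_subset hC.2.1 hSA)
    (induce_union_connected hC.2.2.1.preconnected hS.preconnected ⟨x, hxC, hxS⟩)

theorem eq_of_mem {C' : Set V} (hC : IsCompOf G A C) (hC' : IsCompOf G A C') {x : V}
    (hx : x ∈ C) (hx' : x ∈ C') : C = C' :=
  (hC'.subset_of_connected hC.2.1 hC.2.2.1 hx hx').antisymm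
    (hC.subset_of_connected hC'.2.1 hC'.2.2.1 hx' hx)

theorem mem_of_adj (hC : IsCompOf G A C) {u w : V} (hu : u ∈ C) (hw : w ∈ A) (huw : G.Adj u w) :
    w ∈ C :=
  hC.subset_of_connected (insert_subset (hC.2.1 hu) (singleton_subset_iff.2 hw))
    (induce_pair_connected_of_adj huw) (mem_insert u _) hu (mem_insert_of_mem _ rfl)

theorem exists_mem_support_notMem (hC : IsCompOf G A C) {u y : V} (hu : u ∈ C)
    (p : G.Walk u y) (hy : y ∉ C) : ∃ b ∈ p.support, b ∉ A := by
  obtain ⟨d, hd, hd₁, hd₂⟩ := p.exists_boundary_dart C hu hy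
  exact ⟨d.snd, p.dart_snd_mem_support_of_mem_darts hd, fun h => hd₂ (hC.mem_of_adj hd₁ h d.adj)⟩

end IsCompOf

end Components

section TreeDepth

variable {G : SimpleGraph V} {A B : Set V} {k : ℕ}

namespace TdLE

theorem mono (h : TdLE G A k) {k' : ℕ} (hk : k ≤ k') : TdLE G A k' := by
  induction h generalizing k' with
  | empty => exact .empty _
  | conn A k hc v hv _ ih =>
    obtain ⟨k', rfl⟩ : ∃ k'', k' = k'' + 1 := ⟨k' - 1, by omega⟩
    exact .conn A k' hc v hv (ih (by omega))
  | disconn A k hne hc _ ih => exact .disconn A k' hne hc fun C hC => ih C hC hk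

theorem of_forall_isCompOf (h : ∀ C, IsCompOf G A C → TdLE G C k) : TdLE G A k := by
  rcases A.eq_empty_or_nonempty with rfl | hne
  · exact .empty k
  by_cases hA : (G.induce A).Connected
  · exact h A (isCompOf_self hA)
  · exact .disconn A k hne hA h

theorem subset [Finite V] (h : TdLE G A k) (hBA : B ⊆ A) : TdLE G B k := by
  induction h generalizing B with
  | empty => rw [subset_empty_iff.1 hBA]; exact .empty _
  | conn A k _ v _ _ ih =>
    refine of_forall_isCompOf fun C hC => ?_
    by_cases hv : v ∈ C
    · exact .conn C k hC.2.2.1 v hv (ih (sdiff_subset_sdiff_left (hC.2.1.trans hBA)))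
    · exact (ih (subset_sdiff_singleton (hC.2.1.trans hBA) hv)).mono k.le_succ
  | disconn A k _ _ _ ih =>
    refine of_forall_isCompOf fun C hC => ?_
    obtain ⟨C', hC', hCC'⟩ := exists_isCompOf_superset (hC.2.1.trans hBA) hC.2.2.1
    exact ih C' hC' hCC'

theorem insert [Finite V] (h : TdLE G A k) (x : V) : TdLE G (insert x A) (k + 1) := by
  refine of_forall_isCompOf fun C hC => ?_
  by_cases hx : x ∈ C
  · exact .conn C k hC.2.2.1 x hx (h.subset (sdiff_singleton_subset_iff.2 hC.2.1))
  · exact (h.subset ((subset_insert_iff_of_notMem hx).1 hC.2.1)).mono k.le_succ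

theorem union [Finite V] (h : TdLE G A k) (X : Set V) : TdLE G (A ∪ X) (k + X.ncard) := by
  induction X, toFinite X using Set.Finite.induction_on with
  | empty => simpa using h
  | @insert a X ha hX ih =>
    rw [union_insert, ncard_insert_of_notMem ha hX, ← add_assoc]
    exact ih.insert a

theorem sUnion [Finite V] {parts : Set (Set V)} (h : ∀ P ∈ parts, TdLE G P k)
    (hparts : ∀ P ∈ parts, ∀ Q ∈ parts, ∀ u ∈ P, ∀ w ∈ Q, G.Adj u w → P = Q) :
    TdLE G (⋃₀ parts) k := by
  refine of_forall_isCompOf fun C hC => ?_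
  obtain ⟨x, hx⟩ := hC.1
  obtain ⟨P, hP, hxP⟩ := hC.2.1 hx
  refine (h P hP).subset (subset_of_induce_connected hC.2.2.1 hx hxP fun u _ w hw hu huw => ?_)
  obtain ⟨Q, hQ, hwQ⟩ := hC.2.1 hw
  rwa [hparts P hP Q hQ u hu w hwQ huw]

end TdLE

end TreeDepth

section Elimination

variable [Finite V] {G : SimpleGraph V} {k d : ℕ}

theorem gdeg_le_degreeIn_add {A B : Set V} {u : V} (hu : G.neighborSet u ⊆ A ∪ B) :
    gdeg G u ≤ degreeIn G A u + B.ncard := by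
  have hsub : G.neighborSet u ⊆ (A ∩ G.neighborSet u) ∪ B := fun x hx =>
    (hu hx).imp (fun hxA => ⟨hxA, hx⟩) id
  exact (ncard_le_ncard hsub).trans (ncard_union_le _ _)

theorem EdLE.induction_on_boundary {motive : Set V → ℕ → Set V → Prop}
    (base : ∀ A j B, (∀ u ∈ A, gdeg G u ≤ k + d) → motive A j B)
    (delete : ∀ A j B v, EdLE G d (A \ {v}) j →
      (∀ u ∈ A \ {v}, G.neighborSet u ⊆ A \ {v} ∪ insert v B) →
      (insert v B).ncard + j ≤ k → motive (A \ {v}) j (insert v B) → motive A (j + 1) B)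
    (split : ∀ A j B, (∀ C, IsCompOf G A C → motive C j B) → motive A j B)
    {A : Set V} {j : ℕ} (h : EdLE G d A j) {B : Set V}
    (hB : ∀ u ∈ A, G.neighborSet u ⊆ A ∪ B) (hk : B.ncard + j ≤ k) : motive A j B := by
  induction h generalizing B with
  | base A j hdeg =>
    refine base A j B fun u hu => ?_
    have := gdeg_le_degreeIn_add (hB u hu)
    have := hdeg u hu
    omega
  | conn A j _ _ v _ hdel ih =>
    have hB' : ∀ u ∈ A \ {v}, G.neighborSet u ⊆ A \ {v} ∪ insert v B := by
      intro u hu x hx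
      by_cases hxv : x = v
      · exact Or.inr (.inl hxv)
      · exact (hB u hu.1 hx).imp (fun hxA => ⟨hxA, hxv⟩) .inr
    have hk' : (insert v B).ncard + j ≤ k := by
      have := ncard_insert_le v B
      omega
    exact delete A j B v hdel hB' hk' (ih hB' hk')
  | disconn A j _ _ _ ih =>
    refine split A j B fun C hC => ih C hC (fun u hu x hx => ?_) hk
    exact (hB u (hC.2.1 hu) hx).imp_left (hC.mem_of_adj hu · hx)

end Elimination

section Counting

def highNeighbors (G : SimpleGraph V) (m : ℕ) (R A : Set V) : Set V :=
  {u | u ∈ A ∧ m < gdeg G u ∧ ∃ x ∈ R, G.Adj u x}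

def entryEdges (G : SimpleGraph V) (R A : Set V) : Set (V × V) :=
  {e | e.1 ∈ R ∧ e.1 ∉ A ∧ e.2 ∈ A ∧ G.Adj e.1 e.2}

variable {G : SimpleGraph V} {R : Set V} {m : ℕ}

theorem entryEdges_nonempty {A : Set V} (hR : (G.induce R).Connected) (hRA : ¬ R ⊆ A)
    (hne : (highNeighbors G m R A).Nonempty) : (entryEdges G R A).Nonempty := by
  by_contra hE
  obtain ⟨u, huA, -, x, hxR, hux⟩ := hne
  by_cases hxA : x ∈ A
  · refine hRA (subset_of_induce_connected hR hxR hxA fun y _ z hzR hyA hyz => ?_)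
    by_contra hzA
    exact hE ⟨(z, y), hzR, hzA, hyA, hyz.symm⟩
  · exact hE ⟨(x, u), hxR, hxA, huA, hux.symm⟩

theorem ncard_image_prodMk_neighborSet (b : V) :
    (Prod.mk b '' G.neighborSet b).ncard = gdeg G b :=
  ncard_image_of_injective _ (Prod.mk_right_injective b)

variable [Finite V]

theorem ncard_entryEdges_le (hRlow : ∀ x ∈ R, gdeg G x ≤ m) {A B : Set V}
    (hB : ∀ u ∈ A, G.neighborSet u ⊆ A ∪ B) : (entryEdges G R A).ncard ≤ B.ncard * m := by
  set F := (toFinite (B ∩ R)).toFinset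
  have hsub : entryEdges G R A ⊆ ⋃ b ∈ F, Prod.mk b '' G.neighborSet b := by
    rintro ⟨b, x⟩ ⟨hbR, hbA, hxA, hbx⟩
    have hbB : b ∈ B := (hB x hxA hbx.symm).resolve_left hbA
    exact mem_iUnion₂.2 ⟨b, (toFinite _).mem_toFinset.2 ⟨hbB, hbR⟩, x, hbx, rfl⟩
  calc (entryEdges G R A).ncard
      ≤ ∑ b ∈ F, (Prod.mk b '' G.neighborSet b).ncard :=
        (ncard_le_ncard hsub).trans (F.set_ncard_biUnion_le _)
    _ ≤ (B ∩ R).ncard * m := by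
        rw [ncard_eq_toFinset_card _ (toFinite _), ← smul_eq_mul]
        exact Finset.sum_le_card_nsmul _ _ _ fun b hb =>
          (ncard_image_prodMk_neighborSet b).trans_le (hRlow b ((toFinite _).mem_toFinset.1 hb).2)
    _ ≤ B.ncard * m := Nat.mul_le_mul_right _ (ncard_le_ncard inter_subset_left)

theorem ncard_entryEdges_sdiff_singleton_le (hRlow : ∀ x ∈ R, gdeg G x ≤ m) (A : Set V)
    (v : V) : (entryEdges G R (A \ {v})).ncard ≤ (entryEdges G R A).ncard + m := by
  by_cases hvR : v ∈ R
  · have hsub : entryEdges G R (A \ {v}) ⊆ entryEdges G R A ∪ Prod.mk v '' G.neighborSet v := by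
      rintro ⟨b, x⟩ ⟨hbR, hbA, hxA, hbx⟩
      by_cases hbv : b = v
      · subst hbv
        exact .inr ⟨x, hbx, rfl⟩
      · exact .inl ⟨hbR, fun hb => hbA ⟨hb, hbv⟩, hxA.1, hbx⟩
    exact (ncard_le_ncard hsub).trans <| (ncard_union_le _ _).trans <|
      Nat.add_le_add_left ((ncard_image_prodMk_neighborSet v).trans_le (hRlow v hvR)) _
  · have hsub : entryEdges G R (A \ {v}) ⊆ entryEdges G R A := by
      rintro ⟨b, x⟩ ⟨hbR, hbA, hxA, hbx⟩
      exact ⟨hbR, fun hb => hbA ⟨hb, fun hbv => hvR (hbv ▸ hbR)⟩, hxA.1, hbx⟩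
    exact (ncard_le_ncard hsub).trans (Nat.le_add_right _ _)

theorem ncard_highNeighbors_le_of_isCompOf {A : Set V} {c : ℕ}
    (h : ∀ C, IsCompOf G A C → (highNeighbors G m R C).ncard ≤ (entryEdges G R C).ncard * c) :
    (highNeighbors G m R A).ncard ≤ (entryEdges G R A).ncard * c := by
  have hfin : {C | IsCompOf G A C}.Finite := toFinite _
  set F := hfin.toFinset
  have hF : ∀ {C}, C ∈ F ↔ IsCompOf G A C := hfin.mem_toFinset
  have hcover : highNeighbors G m R A ⊆ ⋃ C ∈ F, highNeighbors G m R C := by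
    rintro u ⟨huA, hu⟩
    obtain ⟨C, hC, huC⟩ := exists_isCompOf_mem huA
    exact mem_iUnion₂.2 ⟨C, hF.2 hC, huC, hu⟩
  have hdisj : (F : Set (Set V)).PairwiseDisjoint (entryEdges G R) := by
    intro C hC C' hC' hne
    rw [Function.onFun, Set.disjoint_left]
    rintro ⟨b, x⟩ ⟨-, -, hxC, -⟩ ⟨-, -, hxC', -⟩
    exact hne ((hF.1 hC).eq_of_mem (hF.1 hC') hxC hxC')
  have hsub : (⋃ C ∈ F, entryEdges G R C) ⊆ entryEdges G R A := by
    refine iUnion₂_subset fun C hC => ?_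
    rintro ⟨b, x⟩ ⟨hbR, hbC, hxC, hbx⟩
    exact ⟨hbR, fun hbA => hbC ((hF.1 hC).mem_of_adj hxC hbA hbx.symm), (hF.1 hC).2.1 hxC, hbx⟩
  calc (highNeighbors G m R A).ncard
      ≤ ∑ C ∈ F, (highNeighbors G m R C).ncard :=
        (ncard_le_ncard hcover).trans (F.set_ncard_biUnion_le _)
    _ ≤ ∑ C ∈ F, (entryEdges G R C).ncard * c := Finset.sum_le_sum fun C hC => h C (hF.1 hC)
    _ = (⋃ C ∈ F, entryEdges G R C).ncard * c := by
        rw [← Finset.sum_mul, ← Finset.set_biUnion_coe,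
          F.finite_toSet.ncard_biUnion (fun _ _ => toFinite _) hdisj, finsum_mem_coe_finset]
    _ ≤ (entryEdges G R A).ncard * c := Nat.mul_le_mul_right _ (ncard_le_ncard hsub)

/-- A deletion adds at most `m` entry edges, and while some vertex is counted there is already an
entry edge (`R` is connected and not inside `A`), so the ratio grows by a factor at most `m + 2`. -/
theorem ncard_highNeighbors_le_entryEdges {k d : ℕ} (hRlow : ∀ x ∈ R, gdeg G x ≤ k + d)
    (hR : (G.induce R).Connected) {A B : Set V} {j : ℕ} (h : EdLE G d A j)
    (hB : ∀ u ∈ A, G.neighborSet u ⊆ A ∪ B) (hk : B.ncard + j ≤ k) (hRA : ¬ R ⊆ A) :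
    (highNeighbors G (k + d) R A).ncard ≤ (entryEdges G R A).ncard * (k + d + 2) ^ j := by
  refine h.induction_on_boundary (motive := fun A j _ => ¬ R ⊆ A →
    (highNeighbors G (k + d) R A).ncard ≤ (entryEdges G R A).ncard * (k + d + 2) ^ j)
    ?base ?delete ?split hB hk hRA
  case base =>
    intro A j B hlow _
    have hE : highNeighbors G (k + d) R A = ∅ :=
      eq_empty_of_forall_notMem fun u ⟨huA, hu, _⟩ => (hlow u huA).not_gt hu
    simp [hE]
  case delete =>
    intro A j B v _ _ _ ih hRA
    rcases (highNeighbors G (k + d) R A).eq_empty_or_nonempty with hE | hne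
    · simp [hE]
    have he : 1 ≤ (entryEdges G R A).ncard :=
      (ncard_pos (toFinite _)).2 (entryEdges_nonempty hR hRA hne)
    have hA : highNeighbors G (k + d) R A ⊆ insert v (highNeighbors G (k + d) R (A \ {v})) :=
      fun u ⟨huA, hu⟩ => or_iff_not_imp_left.2 fun huv => ⟨⟨huA, huv⟩, hu⟩
    have h₁ := (ncard_le_ncard hA).trans (ncard_insert_le _ _)
    have h₂ := ih fun hR' => hRA (hR'.trans sdiff_subset)
    have hP : 1 ≤ (k + d + 2) ^ j := Nat.one_le_pow _ _ (by omega)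
    calc (highNeighbors G (k + d) R A).ncard
        ≤ (entryEdges G R (A \ {v})).ncard * (k + d + 2) ^ j + 1 := by omega
      _ ≤ ((entryEdges G R A).ncard + (k + d)) * (k + d + 2) ^ j + 1 := by
          gcongr
          exact ncard_entryEdges_sdiff_singleton_le hRlow A v
      _ ≤ (entryEdges G R A).ncard * (k + d + 2) ^ (j + 1) := by
          rw [pow_succ]
          nlinarith [Nat.mul_le_mul he hP, Nat.le_mul_of_pos_left ((k + d) * (k + d + 2) ^ j) he]
  case split =>
    intro A j B ih hRA
    exact ncard_highNeighbors_le_of_isCompOf fun C hC => ih C hC fun hRC => hRA (hRC.trans hC.2.1)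

end Counting

section Torso

def LowReachable (G : SimpleGraph V) (m : ℕ) (u b : V) : Prop :=
  ∃ p : G.Walk u b, ∀ w ∈ p.support, w ≠ u → gdeg G w ≤ m

def torsoInterior (G : SimpleGraph V) (m : ℕ) (A : Set V) : Set {v : V // m < gdeg G v} :=
  {u | ∀ b, LowReachable G m u.1 b → b ∈ A}

def lowComponent (G : SimpleGraph V) (m : ℕ) (v : V) : Set V :=
  {x | ∃ q : G.Walk x v, ∀ w ∈ q.support, gdeg G w ≤ m}

variable {G : SimpleGraph V} {m : ℕ} {A : Set V}

theorem lowReachable_of_mem_support {u b y : V} {p : G.Walk u b}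
    (hp : ∀ w ∈ p.support, w ≠ u → gdeg G w ≤ m) (hy : y ∈ p.support) : LowReachable G m u y := by
  classical
  exact ⟨p.takeUntil y hy, fun w hw => hp w (p.support_takeUntil_subset_support hy hw)⟩

theorem mem_of_mem_torsoInterior {u : {v : V // m < gdeg G v}}
    (hu : u ∈ torsoInterior G m A) : u.1 ∈ A :=
  hu u.1 ⟨.nil, fun w hw hwu => absurd (by simpa using hw) hwu⟩

theorem torsoInterior_mono {A' : Set V} (hAA' : A ⊆ A') :
    torsoInterior G m A ⊆ torsoInterior G m A' :=
  fun _ hu b hb => hAA' (hu b hb)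

theorem torsoInterior_univ : torsoInterior G m univ = univ :=
  eq_univ_of_forall fun _ b _ => mem_univ b

theorem torsoInterior_eq_empty (hlow : ∀ u ∈ A, gdeg G u ≤ m) : torsoInterior G m A = ∅ :=
  eq_empty_of_forall_notMem fun u hu => (hlow _ (mem_of_mem_torsoInterior hu)).not_gt u.2

theorem gdeg_le_of_mem_lowComponent {v x : V} (hx : x ∈ lowComponent G m v) : gdeg G x ≤ m :=
  hx.elim fun q hq => hq x q.start_mem_support

theorem lowComponent_connected {v : V} (hv : gdeg G v ≤ m) :
    (G.induce (lowComponent G m v)).Connected := by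
  classical
  refine induce_connected_of_patches v ⟨.nil, by simpa using hv⟩ fun {x} ⟨q, hq⟩ => ?_
  refine ⟨{w | w ∈ q.support}, fun w hw => ⟨q.dropUntil w hw, fun z hz =>
    hq z (q.support_dropUntil_subset_support hw hz)⟩, q.end_mem_support, q.start_mem_support, ?_⟩
  exact q.connected_induce_support.preconnected _ _

/-- The low walk witnessing `u ∉ torsoInterior G m (A \ {v})` stays inside `A`, so it ends
at `v`. -/
theorem exists_adj_lowComponent {v : V} {u : {v : V // m < gdeg G v}}
    (hu : u ∈ torsoInterior G m A) (hu' : u ∉ torsoInterior G m (A \ {v})) (huv : u.1 ≠ v) :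
    gdeg G v ≤ m ∧ ∃ x ∈ lowComponent G m v, G.Adj u.1 x := by
  classical
  simp only [torsoInterior, mem_ofPred_eq, not_forall] at hu'
  obtain ⟨b, ⟨p, hp⟩, hb⟩ := hu'
  obtain rfl : b = v := by
    by_contra hbv
    exact hb ⟨hu b ⟨p, hp⟩, hbv⟩
  refine ⟨hp b p.end_mem_support (Ne.symm huv), ?_⟩
  obtain ⟨x, hux, q, hq⟩ := p.bypass.exists_eq_cons_of_ne huv
  have hpath := p.bypass_isPath
  rw [hq, Walk.cons_isPath_iff] at hpath
  have hqp : ∀ w ∈ q.support, w ∈ p.support := fun w hw =>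
    p.support_bypass_subset_support (by rw [hq, Walk.support_cons]; exact .tail _ hw)
  exact ⟨x, ⟨q, fun w hw => hp w (hqp w hw) fun h => hpath.2 (h ▸ hw)⟩, hux⟩

namespace IsCompOf

variable {C : Set V}

theorem mem_torsoInterior (hC : IsCompOf G A C) {u : {v : V // m < gdeg G v}} (hu : u.1 ∈ C)
    (huA : u ∈ torsoInterior G m A) : u ∈ torsoInterior G m C := by
  rintro b ⟨p, hp⟩
  by_contra hb
  obtain ⟨y, hy, hyA⟩ := hC.exists_mem_support_notMem hu p hb
  exact hyA (huA y (lowReachable_of_mem_support hp hy))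

theorem mem_of_torso_adj (hC : IsCompOf G A C) {u w : {v : V // m < gdeg G v}}
    (hu : u ∈ torsoInterior G m C) (hw : w.1 ∈ A) (huw : (ATorso G m).Adj u w) : w.1 ∈ C := by
  classical
  by_contra hwC
  obtain ⟨-, p, hp, hlow⟩ := huw
  obtain ⟨y, hy, hyA⟩ := hC.exists_mem_support_notMem (mem_of_mem_torsoInterior hu) p hwC
  have hwy : w.1 ≠ y := fun h => hyA (h ▸ hw)
  refine hyA (hC.2.1 (hu y ⟨p.takeUntil y hy, fun z hz hzu =>
    hlow z (p.support_takeUntil_subset_support hy hz) hzu ?_⟩))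
  rintro rfl
  exact Walk.endpoint_notMem_support_takeUntil hp hy hwy hz

end IsCompOf

variable [Finite V]

theorem torsoInterior_eq_sUnion (A : Set V) :
    torsoInterior G m A = ⋃₀ (torsoInterior G m '' {C | IsCompOf G A C}) := by
  ext u
  constructor
  · intro hu
    obtain ⟨C, hC, huC⟩ := exists_isCompOf_mem (mem_of_mem_torsoInterior hu)
    exact ⟨_, ⟨C, hC, rfl⟩, hC.mem_torsoInterior huC hu⟩
  · rintro ⟨_, ⟨C, hC, rfl⟩, hu⟩
    exact torsoInterior_mono hC.2.1 hu

variable {k d : ℕ}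

theorem ncard_torsoInterior_sdiff_le {B : Set V} {v : V} {j : ℕ} (h : EdLE G d (A \ {v}) j)
    (hB : ∀ u ∈ A \ {v}, G.neighborSet u ⊆ A \ {v} ∪ insert v B)
    (hk : (insert v B).ncard + j ≤ k) :
    (torsoInterior G (k + d) A \ torsoInterior G (k + d) (A \ {v})).ncard ≤
      1 + k * (k + d) * (k + d + 2) ^ (k - 1) := by
  set D := torsoInterior G (k + d) A \ torsoInterior G (k + d) (A \ {v})
  by_cases hv : gdeg G v ≤ k + d
  · have hD : Subtype.val '' D ⊆
        highNeighbors G (k + d) (lowComponent G (k + d) v) (A \ {v}) := by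
      rintro _ ⟨u, ⟨hu, hu'⟩, rfl⟩
      have huv : u.1 ≠ v := fun h => (h ▸ u.2).not_ge hv
      obtain ⟨-, x, hx, hux⟩ := exists_adj_lowComponent hu hu' huv
      exact ⟨⟨mem_of_mem_torsoInterior hu, huv⟩, u.2, x, hx, hux⟩
    have hRA : ¬ lowComponent G (k + d) v ⊆ A \ {v} := fun hsub =>
      (hsub ⟨.nil, by simpa using hv⟩).2 rfl
    have hB₁ : 1 ≤ (insert v B).ncard := (ncard_pos (toFinite _)).2 (insert_nonempty v B)
    calc D.ncard = (Subtype.val '' D).ncard :=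
          (ncard_image_of_injective _ Subtype.val_injective).symm
      _ ≤ (highNeighbors G (k + d) (lowComponent G (k + d) v) (A \ {v})).ncard :=
          ncard_le_ncard hD
      _ ≤ (entryEdges G (lowComponent G (k + d) v) (A \ {v})).ncard * (k + d + 2) ^ j :=
          ncard_highNeighbors_le_entryEdges (fun _ => gdeg_le_of_mem_lowComponent)
            (lowComponent_connected hv) h hB hk hRA
      _ ≤ (insert v B).ncard * (k + d) * (k + d + 2) ^ j :=
          Nat.mul_le_mul_right _ (ncard_entryEdges_le (fun _ => gdeg_le_of_mem_lowComponent) hB)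
      _ ≤ k * (k + d) * (k + d + 2) ^ (k - 1) :=
          Nat.mul_le_mul (Nat.mul_le_mul_right _ (by omega))
            (Nat.pow_le_pow_right (by omega) (by omega))
      _ ≤ _ := Nat.le_add_left _ _
  · have hD : D ⊆ {⟨v, not_le.1 hv⟩} := by
      rintro u ⟨hu, hu'⟩
      by_contra huv
      exact hv (exists_adj_lowComponent hu hu' fun h => huv (Subtype.ext h)).1
    exact (ncard_le_ncard hD).trans (by simp)

theorem tdLE_torsoInterior {A B : Set V} {j : ℕ} (h : EdLE G d A j)
    (hB : ∀ u ∈ A, G.neighborSet u ⊆ A ∪ B) (hk : B.ncard + j ≤ k) :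
    TdLE (ATorso G (k + d)) (torsoInterior G (k + d) A)
      (j * (1 + k * (k + d) * (k + d + 2) ^ (k - 1))) := by
  set c := 1 + k * (k + d) * (k + d + 2) ^ (k - 1)
  refine h.induction_on_boundary
    (motive := fun A j _ => TdLE (ATorso G (k + d)) (torsoInterior G (k + d) A) (j * c))
    ?base ?delete ?split hB hk
  case base =>
    intro A j B hlow
    rw [torsoInterior_eq_empty hlow]
    exact .empty _
  case delete =>
    intro A j B v hdel hB' hk' ih
    have hsub : torsoInterior G (k + d) A ⊆ torsoInterior G (k + d) (A \ {v}) ∪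
        (torsoInterior G (k + d) A \ torsoInterior G (k + d) (A \ {v})) := by
      rw [union_sdiff_self]
      exact subset_union_right
    refine ((ih.union _).subset hsub).mono ?_
    have := ncard_torsoInterior_sdiff_le hdel hB' hk'
    rw [add_mul, one_mul]
    omega
  case split =>
    intro A j B ih
    rw [torsoInterior_eq_sUnion]
    refine TdLE.sUnion (by rintro _ ⟨C, hC, rfl⟩; exact ih C hC) ?_
    rintro _ ⟨C, hC, rfl⟩ _ ⟨C', hC', rfl⟩ u hu w hw huw
    have hwA := hC'.2.1 (mem_of_mem_torsoInterior hw)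
    rw [hC.eq_of_mem hC' (hC.mem_of_torso_adj hu hwA huw) (mem_of_mem_torsoInterior hw)]

end Torso

theorem one_add_mul_mul_pow_le {k m : ℕ} (hk : 0 < k) (hm : 0 < m) :
    1 + k * m * (m + 2) ^ (k - 1) ≤ ((k + 1) * m) ^ 2 ^ k := by
  have hX : 1 ≤ (k + 1) * m := Nat.one_le_iff_ne_zero.2 (by positivity)
  refine le_trans ?_ (Nat.pow_le_pow_right hX Nat.lt_two_pow_self.le)
  obtain rfl | hk₂ : k = 1 ∨ 2 ≤ k := by omega
  · simp only [pow_one, Nat.sub_self, pow_zero, mul_one]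
    omega
  have hmX : m + 2 ≤ (k + 1) * m := by nlinarith
  obtain ⟨i, rfl⟩ : ∃ i, k = i + 1 := ⟨k - 1, by omega⟩
  have hpos : 1 ≤ m * ((i + 1 + 1) * m) ^ i := Nat.mul_le_mul hm (Nat.one_le_pow _ _ hX)
  calc 1 + (i + 1) * m * (m + 2) ^ (i + 1 - 1)
      ≤ m * ((i + 1 + 1) * m) ^ i + (i + 1) * m * ((i + 1 + 1) * m) ^ i := by
        rw [Nat.add_sub_cancel]
        gcongr
    _ = ((i + 1 + 1) * m) ^ (i + 1) := by ring

/-- If `G` has elimination distance at most `k` to degree `d`, then the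
`(k+d)`-degree torso of `G` has tree-depth at most `k((k+1)(k+d))^(2^k)`. -/
theorem kd_torso_treedepth {V : Type*} [Fintype V] (G : SimpleGraph V)
    (k d : ℕ) (hed : EdLE G d Set.univ k) :
    TdLE (ATorso G (k + d)) Set.univ (k * ((k + 1) * (k + d)) ^ (2 ^ k)) := by
  have h := tdLE_torsoInterior (k := k) hed (B := ∅) (fun _ _ _ _ => .inl trivial) (by simp)
  rw [torsoInterior_univ] at h
  rcases k.eq_zero_or_pos with rfl | hk
  · simpa using h
  exact h.mono (Nat.mul_le_mul_left k (one_add_mul_mul_pow_le hk (by omega)))
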